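/- (Zero-curvature representation of Painlevé P2.) Let α ∈ ℝ and let x : ℝ → ℝ be twice differentiable. For t ∈ ℝ and λ ∈ ℝ with λ ≠ 0 define the 2×2 real matrices U¹(t,λ) := [[−λ, x(t)], [x(t), λ]] and U²(t,λ) := [[4λ² − 2x(t)² − t, −4x(t)λ + α/λ + 2x'(t)], [−4x(t)λ + α/λ − 2x'(t), −4λ² + 2x(t)² + t]]. Then for all t ∈ ℝ and all λ ≠ 0: ∂_λU¹ − ∂_tU² + [U¹, U²] = 2(x''(t) − 2x(t)³ − t·x(t) + α) · e₃, where e₃ = [[0,−1],[1,0]]. In particular the zero-curvature condition holds identically on ℝ × (ℝ \ {0}) if and only if x satisfies the second Painlevé equation x'' = 2x³ + tx − α. -/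

import Mathlib

open Matrix

attribute [local instance] Matrix.normedAddCommGroup Matrix.normedSpace

/-- Partial derivative in the first variable `ξ₁` of a matrix-valued map on `ℝ²`. -/
noncomputable def pd1 {n : ℕ} (f : ℝ × ℝ → Matrix (Fin n) (Fin n) ℝ) (p : ℝ × ℝ) :
    Matrix (Fin n) (Fin n) ℝ :=
  fderiv ℝ f p (1, 0)

/-- Partial derivative in the second variable `ξ₂` of a matrix-valued map on `ℝ²`. -/
noncomputable def pd2 {n : ℕ} (f : ℝ × ℝ → Matrix (Fin n) (Fin n) ℝ) (p : ℝ × ℝ) :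
    Matrix (Fin n) (Fin n) ℝ :=
  fderiv ℝ f p (0, 1)

/-- The P2 potential matrix `U¹(t,λ) = [[−λ, x(t)], [x(t), λ]]`; the point `p = (t, λ)`. -/
noncomputable def U1P2 (x : ℝ → ℝ) (p : ℝ × ℝ) : Matrix (Fin 2) (Fin 2) ℝ :=
  !![-p.2, x p.1; x p.1, p.2]

/-- The P2 potential matrix
`U²(t,λ) = [[4λ² − 2x² − t, −4xλ + α/λ + 2x'], [−4xλ + α/λ − 2x', −4λ² + 2x² + t]]`. -/
noncomputable def U2P2 (α : ℝ) (x : ℝ → ℝ) (p : ℝ × ℝ) : Matrix (Fin 2) (Fin 2) ℝ :=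
  !![4 * p.2 ^ 2 - 2 * (x p.1) ^ 2 - p.1,
     -4 * x p.1 * p.2 + α / p.2 + 2 * deriv x p.1;
     -4 * x p.1 * p.2 + α / p.2 - 2 * deriv x p.1,
     -4 * p.2 ^ 2 + 2 * (x p.1) ^ 2 + p.1]

/-- The basis element `e₃ = [[0, −1], [1, 0]]` of `sl(2,ℝ)`. -/
def e3 : Matrix (Fin 2) (Fin 2) ℝ := !![0, -1; 1, 0]

/-!
`U¹` and `U²` are traceless, so they expand in the basis `σ₁ = [[0,1],[1,0]]`,
`σ₃ = [[1,0],[0,−1]]`, `e₃` of `sl(2,ℝ)` with scalar coefficients in `(t, λ)`. The partial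
derivatives are then ordinary derivatives of these coefficients along coordinate lines, and
since `[σ₁, σ₃] = 2e₃`, `[σ₁, e₃] = 2σ₃`, `[σ₃, e₃] = −2σ₁`, the `σ₁`- and `σ₃`-components of
the curvature cancel, leaving `2(x'' − 2x³ − tx + α)·e₃`.
-/

lemma pd1_eq_of_hasDerivAt {n : ℕ} {f : ℝ × ℝ → Matrix (Fin n) (Fin n) ℝ} {p : ℝ × ℝ}
    {v : Matrix (Fin n) (Fin n) ℝ} (hf : DifferentiableAt ℝ f p)
    (hv : HasDerivAt (fun t => f (t, p.2)) v p.1) : pd1 f p = v :=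
  (hf.hasFDerivAt.comp_hasDerivAt p.1
    ((hasDerivAt_id p.1).prodMk (hasDerivAt_const p.1 p.2))).unique hv

lemma pd2_eq_of_hasDerivAt {n : ℕ} {f : ℝ × ℝ → Matrix (Fin n) (Fin n) ℝ} {p : ℝ × ℝ}
    {v : Matrix (Fin n) (Fin n) ℝ} (hf : DifferentiableAt ℝ f p)
    (hv : HasDerivAt (fun s => f (p.1, s)) v p.2) : pd2 f p = v :=
  (hf.hasFDerivAt.comp_hasDerivAt p.2
    ((hasDerivAt_const p.2 p.1).prodMk (hasDerivAt_id p.2))).unique hv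

def sigma1 : Matrix (Fin 2) (Fin 2) ℝ := !![0, 1; 1, 0]

def sigma3 : Matrix (Fin 2) (Fin 2) ℝ := !![1, 0; 0, -1]

lemma e3_ne_zero : e3 ≠ 0 := fun h => by
  simpa [e3] using congrFun (congrFun h 1) 0

lemma U1P2_eq (x : ℝ → ℝ) : U1P2 x = fun q => x q.1 • sigma1 - q.2 • sigma3 := by
  funext q; ext i j
  fin_cases i <;> fin_cases j <;> simp [U1P2, sigma1, sigma3]

lemma U2P2_eq (α : ℝ) (x : ℝ → ℝ) : U2P2 α x = fun q =>
    (4 * q.2 ^ 2 - 2 * x q.1 ^ 2 - q.1) • sigma3 + (-4 * x q.1 * q.2 + α / q.2) • sigma1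
      - (2 * deriv x q.1) • e3 := by
  funext q; ext i j
  fin_cases i <;> fin_cases j <;> simp [U2P2, sigma1, sigma3, e3]
  ring

lemma pd2_U1P2 {x : ℝ → ℝ} (hx : Differentiable ℝ x) (p : ℝ × ℝ) :
    pd2 (U1P2 x) p = -sigma3 := by
  rw [U1P2_eq]
  refine pd2_eq_of_hasDerivAt (by fun_prop) ?_
  exact ((hasDerivAt_id p.2).smul_const sigma3).const_sub (x p.1 • sigma1) |>.congr_deriv
    (by simp)

lemma pd1_U2P2 (α : ℝ) {x : ℝ → ℝ} (hx : Differentiable ℝ x)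
    (hx' : Differentiable ℝ (deriv x)) {p : ℝ × ℝ} (hp : p.2 ≠ 0) :
    pd1 (U2P2 α x) p = (-4 * x p.1 * deriv x p.1 - 1) • sigma3
      - (4 * deriv x p.1 * p.2) • sigma1 - (2 * deriv (deriv x) p.1) • e3 := by
  rw [U2P2_eq]
  refine pd1_eq_of_hasDerivAt (by fun_prop (disch := exact hp)) ?_
  have hσ₃ : HasDerivAt (fun t => 4 * p.2 ^ 2 - 2 * x t ^ 2 - t)
      (-4 * x p.1 * deriv x p.1 - 1) p.1 :=
    ((((hx p.1).hasDerivAt.pow 2).const_mul 2).const_sub (4 * p.2 ^ 2)).sub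
      (hasDerivAt_id p.1) |>.congr_deriv (by push_cast; ring)
  have hσ₁ : HasDerivAt (fun t => -4 * x t * p.2 + α / p.2) (-(4 * deriv x p.1 * p.2)) p.1 :=
    (((hx p.1).hasDerivAt.const_mul (-4)).mul_const p.2).add_const (α / p.2)
      |>.congr_deriv (by ring)
  have he₃ : HasDerivAt (fun t => 2 * deriv x t) (2 * deriv (deriv x) p.1) p.1 :=
    (hx' p.1).hasDerivAt.const_mul 2
  exact ((hσ₃.smul_const sigma3).add (hσ₁.smul_const sigma1)).sub (he₃.smul_const e3)
    |>.congr_deriv (by rw [neg_smul, sub_eq_add_neg _ ((4 * _ * _) • sigma1)])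

lemma commutator_U1P2_U2P2 (α : ℝ) (x : ℝ → ℝ) {p : ℝ × ℝ} (hp : p.2 ≠ 0) :
    U1P2 x p * U2P2 α x p - U2P2 α x p * U1P2 x p
      = (2 * (α - 2 * x p.1 ^ 3 - p.1 * x p.1)) • e3 - (4 * x p.1 * deriv x p.1) • sigma3
        - (4 * deriv x p.1 * p.2) • sigma1 := by
  ext i j
  fin_cases i <;> fin_cases j <;> simp [U1P2, U2P2, e3, sigma1, sigma3] <;> field_simp <;> ring

lemma curvature_U1P2_U2P2 (α : ℝ) {x : ℝ → ℝ} (hx : Differentiable ℝ x)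
    (hx' : Differentiable ℝ (deriv x)) {p : ℝ × ℝ} (hp : p.2 ≠ 0) :
    pd2 (U1P2 x) p - pd1 (U2P2 α x) p + (U1P2 x p * U2P2 α x p - U2P2 α x p * U1P2 x p)
      = (2 * (deriv (deriv x) p.1 - 2 * (x p.1) ^ 3 - p.1 * x p.1 + α)) • e3 := by
  rw [pd2_U1P2 hx, pd1_U2P2 α hx hx' hp, commutator_U1P2_U2P2 α x hp]
  module

/-- zero-curvature representation of Painlevé P2: for twice differentiable
`x` and `λ ≠ 0`, `∂_λU¹ − ∂_tU² + [U¹, U²] = 2(x'' − 2x³ − tx + α)·e₃`, and the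
zero-curvature condition holds identically on `ℝ × (ℝ \ {0})` iff `x` satisfies the second
Painlevé equation `x'' = 2x³ + tx − α`.  Here `∂_t = pd1` and `∂_λ = pd2`. -/
theorem zcr_painleve_two (α : ℝ) (x : ℝ → ℝ)
    (hx : Differentiable ℝ x) (hx' : Differentiable ℝ (deriv x)) :
    (∀ p : ℝ × ℝ, p.2 ≠ 0 →
      pd2 (U1P2 x) p - pd1 (U2P2 α x) p
        + (U1P2 x p * U2P2 α x p - U2P2 α x p * U1P2 x p)
        = (2 * (deriv (deriv x) p.1 - 2 * (x p.1) ^ 3 - p.1 * x p.1 + α)) • e3) ∧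
    ((∀ p : ℝ × ℝ, p.2 ≠ 0 →
      pd2 (U1P2 x) p - pd1 (U2P2 α x) p
        + (U1P2 x p * U2P2 α x p - U2P2 α x p * U1P2 x p) = 0) ↔
      ∀ t : ℝ, deriv (deriv x) t = 2 * (x t) ^ 3 + t * x t - α) := by
  refine ⟨fun p hp => curvature_U1P2_U2P2 α hx hx' hp, fun h t => ?_, fun h p hp => ?_⟩
  · have hcoeff := (curvature_U1P2_U2P2 α hx hx' (p := (t, 1)) one_ne_zero).symm.trans
      (h (t, 1) one_ne_zero)
    rw [smul_eq_zero_iff_left e3_ne_zero] at hcoeff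
    linarith
  · rw [curvature_U1P2_U2P2 α hx hx' hp, h p.1]
    ring_nf
    exact zero_smul ℝ e3
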